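/- There is an M_0 > 0 such that for every real M ≥ M_0 the following holds. Let {X_i}_{i≥1} be i.i.d. positive-integer-valued random variables, W_n = X_1 + ... + X_n, and let {Y_i}_{i≥1} be an independent copy of {X_i} with partial sums U_n = Y_1 + ... + Y_n. Fix a positive integer n, and for each nonnegative integer b ≤ n/M let T_{n-b} = max{i : W_i ≤ n-b}, L_n = {max(X_1,...,X_n) ≤ n/M}, and W'_{b,i} = W_{T_{n-b}} - W_{T_{n-b} - i} for 1 ≤ i ≤ T_{n-b}. Then P( {W_i : 1 ≤ i ≤ T_{n-b}} ∩ {b + W'_{b,i} : 1 ≤ i ≤ T_{n-b}} ∩ [1, n/3] = ∅ and L_n ) ≤ P( {W_i : i ≥ 1} ∩ {b + U_i : i ≥ 1} ∩ [1, n/3] = ∅ ). -/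

import Mathlib

/-!
Call `(a, t)` the cut, where `a` is the last index with `3 W_a ≤ n` and `t = T_{n-b}`. On `L_n`
(with `M ≥ 7`) the gap `X_{a+1}` is at most `n/7`, which forces `a < t`, and the left event is
contained in the union over `(a, t)` of events depending only on `X_1, …, X_{t+1}`. For fixed
`(a, t)`, replace `X_{a+2}, …, X_t` by `Y_{t-a-1}, …, Y_1` and `X_{t+1}` by `Y_{t-a}`: this is an
injective relabelling of the i.i.d. family, so it preserves probabilities, and it turns the
reversed increments `W'_{b,j}` into `U_j`. The relabelled events are disjoint in `(a, t)`, since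
then `W_{a+1} + U_{t-a-1} ≤ n - b < W_{a+1} + U_{t-a}` determines `t`, and each lies in the
right-hand event: a collision `W_i = b + U_j` with `3 W_i ≤ n` and `j ≥ t - a` is impossible
because `b + U_j > n - W_{a+1} ≥ n - n/3 - n/7 > n/3`.
-/

open MeasureTheory ProbabilityTheory Finset

theorem exists_le_lt_succ {α : Type*} [LinearOrder α] {s : ℕ → α} {c : α} (h0 : s 0 ≤ c)
    (hc : ∃ k, c < s k) : ∃ a, s a ≤ c ∧ c < s (a + 1) := by
  classical
  obtain ⟨a, ha⟩ : ∃ a, Nat.find hc = a + 1 :=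
    Nat.exists_eq_add_one.2 (Nat.pos_of_ne_zero fun h => (Nat.find_spec hc).not_ge (h ▸ h0))
  exact ⟨a, not_lt.1 (Nat.find_min hc (by omega)), ha ▸ Nat.find_spec hc⟩

theorem Monotone.eq_of_le_lt_succ {α : Type*} [LinearOrder α] {s : ℕ → α} (hs : Monotone s)
    {c : α} {a a' : ℕ} (ha : s a ≤ c) (ha₁ : c < s (a + 1)) (ha' : s a' ≤ c)
    (ha₁' : c < s (a' + 1)) : a = a' := by
  by_contra hne
  rcases Nat.lt_or_gt_of_ne hne with h | h
  · exact (hs (Nat.succ_le_of_lt h)).not_gt (ha'.trans_lt ha₁)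
  · exact (hs (Nat.succ_le_of_lt h)).not_gt (ha.trans_lt ha₁')

def partialSum (g : ℕ → ℕ) (m : ℕ) : ℕ := ∑ i ∈ Icc 1 m, g i

section partialSum

variable (g : ℕ → ℕ)

@[simp] theorem partialSum_zero : partialSum g 0 = 0 := by simp [partialSum]

theorem partialSum_succ (m : ℕ) : partialSum g (m + 1) = partialSum g m + g (m + 1) :=
  sum_Icc_succ_top (by omega) g

theorem partialSum_mono : Monotone (partialSum g) := fun _ _ h =>
  sum_le_sum_of_subset (Icc_subset_Icc_right h)

variable {g}

theorem le_partialSum (hg : ∀ i, 0 < g i) (m : ℕ) : m ≤ partialSum g m := by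
  induction m with
  | zero => simp
  | succ m ih => rw [partialSum_succ]; have := hg (m + 1); omega

@[fun_prop]
theorem measurable_partialSum (m : ℕ) : Measurable fun g : ℕ → ℕ => partialSum g m := by
  unfold partialSum; fun_prop

end partialSum

def spliceIndex (a t k : ℕ) : ℕ ⊕ ℕ :=
  if k ≤ a + 1 then .inl k
  else if k ≤ t then .inr (t + 1 - k)
  else if k = t + 1 then .inr (t - a)
  else .inl k

theorem spliceIndex_injective (a t : ℕ) : (spliceIndex a t).Injective := by
  intro k l h
  unfold spliceIndex at h
  split_ifs at h <;> simp only [Sum.inl.injEq, Sum.inr.injEq] at h <;> omega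

section splice

variable (z : ℕ ⊕ ℕ → ℕ) {a t : ℕ}

theorem partialSum_splice_of_le {m : ℕ} (hm : m ≤ a + 1) :
    partialSum (z ∘ spliceIndex a t) m = partialSum (z ∘ Sum.inl) m :=
  sum_congr rfl fun k hk => by
    simp [spliceIndex, (mem_Icc.1 hk).2.trans hm]

theorem partialSum_splice_add {j : ℕ} (hj : a + 1 ≤ j) (hjt : j ≤ t) :
    partialSum (z ∘ spliceIndex a t) j + partialSum (z ∘ Sum.inr) (t - j) =
      partialSum (z ∘ Sum.inl) (a + 1) + partialSum (z ∘ Sum.inr) (t - a - 1) := by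
  induction j, hj using Nat.le_induction with
  | base => rw [partialSum_splice_of_le z le_rfl, Nat.sub_sub]
  | succ j hj ih =>
    have hsplice : (z ∘ spliceIndex a t) (j + 1) = (z ∘ Sum.inr) (t - j) := by
      simp [spliceIndex, show ¬ j + 1 ≤ a + 1 by omega, show j + 1 ≤ t by omega,
        show t + 1 - (j + 1) = t - j by omega]
    have hsucc := partialSum_succ (z ∘ Sum.inr) (t - (j + 1))
    rw [show t - (j + 1) + 1 = t - j by omega] at hsucc
    rw [partialSum_succ, hsplice, ← ih (by omega), hsucc]
    ring

theorem partialSum_splice_succ (hat : a < t) :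
    partialSum (z ∘ spliceIndex a t) (t + 1) =
      partialSum (z ∘ Sum.inl) (a + 1) + partialSum (z ∘ Sum.inr) (t - a) := by
  have hsplice : (z ∘ spliceIndex a t) (t + 1) = (z ∘ Sum.inr) (t - a) := by
    simp [spliceIndex, show ¬ t + 1 ≤ a + 1 by omega]
  have hsucc := partialSum_succ (z ∘ Sum.inr) (t - a - 1)
  rw [show t - a - 1 + 1 = t - a by omega] at hsucc
  have hsum := partialSum_splice_add z (t := t) hat le_rfl
  rw [Nat.sub_self, partialSum_zero, add_zero] at hsum
  rw [partialSum_succ, hsplice, hsum, hsucc, add_assoc]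

end splice

/-- The first clause is `S_i ≠ b + (S_t - S_{t-j})`, i.e. `W_i ≠ b + W'_{b,j}`, with the
truncated subtraction moved to the other side. -/
def IsCut (n b a t : ℕ) (g : ℕ → ℕ) : Prop :=
  (∀ i ∈ Icc 1 a, ∀ j ∈ Icc 1 (t - a - 1),
      partialSum g i + partialSum g (t - j) ≠ b + partialSum g t) ∧
    partialSum g t ≤ n - b ∧ n - b < partialSum g (t + 1) ∧
    3 * partialSum g a ≤ n ∧ n < 3 * partialSum g (a + 1) ∧ 7 * g (a + 1) ≤ n

structure IsTwoSidedCut (n b a t : ℕ) (x y : ℕ → ℕ) : Prop where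
  lt : a < t
  noCollision : ∀ i ∈ Icc 1 a, ∀ j ∈ Icc 1 (t - a - 1), partialSum x i ≠ b + partialSum y j
  le_cut : partialSum x (a + 1) + partialSum y (t - a - 1) ≤ n - b
  cut_lt : n - b < partialSum x (a + 1) + partialSum y (t - a)
  three_mul_le : 3 * partialSum x a ≤ n
  lt_three_mul : n < 3 * partialSum x (a + 1)
  gap_le : 7 * x (a + 1) ≤ n

section cut

variable {n b a t : ℕ}

theorem measurableSet_isCut (n b a t : ℕ) : MeasurableSet {g | IsCut n b a t g} := by
  unfold IsCut
  exact Measurable.setOf (by fun_prop)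

theorem IsCut.lt {g : ℕ → ℕ} (hb : 7 * b ≤ n) (h : IsCut n b a t g) : a < t := by
  obtain ⟨-, -, hcut, hthree, -, hgap⟩ := h
  by_contra! hta
  have := partialSum_mono g (show t + 1 ≤ a + 1 by omega)
  rw [partialSum_succ g a] at this
  omega

theorem exists_isCut {g : ℕ → ℕ} (hn : 1 ≤ n) (hb : 7 * b ≤ n) (hg : ∀ i, 0 < g i)
    (hgap : ∀ i ∈ Icc 1 n, 7 * g i ≤ n) (hle : partialSum g t ≤ n - b)
    (hlt : n - b < partialSum g (t + 1))
    (havoid : ∀ i ∈ Icc 1 t, ∀ j ∈ Icc 1 t, ¬ (partialSum g i = b + (partialSum g t -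
      partialSum g (t - j)) ∧ 1 ≤ partialSum g i ∧ 3 * partialSum g i ≤ n)) :
    ∃ a, IsCut n b a t g := by
  obtain ⟨a, ha, ha₁⟩ := exists_le_lt_succ (s := fun k => 3 * partialSum g k) (c := n)
    (by simp) ⟨n + 1, by have := le_partialSum hg (n + 1); omega⟩
  have hat : a ≤ t := by
    by_contra! h
    have := partialSum_mono g (show t + 1 ≤ a by omega)
    omega
  have han : a + 1 ≤ n := by have := le_partialSum hg a; omega
  refine ⟨a, fun i hi j hj heq => ?_, hle, hlt, ha, ha₁, hgap _ (mem_Icc.2 ⟨by omega, han⟩)⟩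
  rw [mem_Icc] at hi hj
  have hi₁ := le_partialSum hg i
  have hia := partialSum_mono g hi.2
  have hjt := partialSum_mono g (Nat.sub_le t j)
  exact havoid i (mem_Icc.2 ⟨hi.1, by omega⟩) j (mem_Icc.2 ⟨hj.1, by omega⟩)
    ⟨by omega, by omega, by omega⟩

theorem IsCut.isTwoSidedCut_splice {z : ℕ ⊕ ℕ → ℕ} (hb : 7 * b ≤ n)
    (h : IsCut n b a t (z ∘ spliceIndex a t)) :
    IsTwoSidedCut n b a t (z ∘ Sum.inl) (z ∘ Sum.inr) := by
  have hat := h.lt hb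
  obtain ⟨hcol, hle, hlt, hthree, hthree₁, hgap⟩ := h
  have ht := partialSum_splice_add z hat le_rfl
  rw [Nat.sub_self, partialSum_zero, add_zero] at ht
  rw [partialSum_splice_of_le z (Nat.le_succ a)] at hthree
  rw [partialSum_splice_of_le z le_rfl] at hthree₁
  refine ⟨hat, fun i hi j hj heq => ?_, ht ▸ hle, partialSum_splice_succ z hat ▸ hlt, hthree,
    hthree₁, by simpa [spliceIndex] using hgap⟩
  rw [mem_Icc] at hi hj
  have hsplit :=
    partialSum_splice_add z (a := a) (t := t) (j := t - j) (by omega) (Nat.sub_le t j)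
  rw [Nat.sub_sub_self (by omega)] at hsplit
  have hcol := hcol i (mem_Icc.2 hi) j (mem_Icc.2 hj)
  rw [partialSum_splice_of_le z (by omega)] at hcol
  omega

section twoSided

variable {x y : ℕ → ℕ}

theorem IsTwoSidedCut.eq {a' t' : ℕ} (h : IsTwoSidedCut n b a t x y)
    (h' : IsTwoSidedCut n b a' t' x y) : a = a' ∧ t = t' := by
  obtain rfl : a = a' := Monotone.eq_of_le_lt_succ (s := fun k => 3 * partialSum x k)
    (fun _ _ hk => Nat.mul_le_mul_left 3 (partialSum_mono x hk))
    h.three_mul_le h.lt_three_mul h'.three_mul_le h'.lt_three_mul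
  have hcut := h.cut_lt
  have hcut' := h'.cut_lt
  rw [show t - a = t - a - 1 + 1 by have := h.lt; omega] at hcut
  rw [show t' - a = t' - a - 1 + 1 by have := h'.lt; omega] at hcut'
  have := Monotone.eq_of_le_lt_succ (s := fun k => partialSum x (a + 1) + partialSum y k)
    (fun _ _ hk => Nat.add_le_add_left (partialSum_mono y hk) _)
    h.le_cut hcut h'.le_cut hcut'
  have := h.lt
  have := h'.lt
  omega

theorem IsTwoSidedCut.ne (h : IsTwoSidedCut n b a t x y) {i j : ℕ} (hi : 1 ≤ i) (hj : 1 ≤ j)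
    (hin : 3 * partialSum x i ≤ n) : partialSum x i ≠ b + partialSum y j := by
  have hia : i ≤ a := by
    by_contra! hai
    have := partialSum_mono x (show a + 1 ≤ i by omega)
    have := h.lt_three_mul
    omega
  by_cases hjt : j ≤ t - a - 1
  · exact h.noCollision i (mem_Icc.2 ⟨hi, hia⟩) j (mem_Icc.2 ⟨hj, hjt⟩)
  · have hyj := partialSum_mono y (show t - a ≤ j by omega)
    have hx := partialSum_succ x a
    have := h.cut_lt
    have := h.three_mul_le
    have := h.gap_le
    omega

end twoSided

end cut

theorem measure_preimage_comp_eq_of_injective {Ω ι κ α : Type*} [MeasurableSpace Ω]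
    [MeasurableSpace α] {μ : Measure Ω} {Z : ι → Ω → α} (hZ : ∀ i, Measurable (Z i))
    (hind : iIndepFun Z μ) {ν : Measure α} (hν : ∀ i, μ.map (Z i) = ν) {p q : κ → ι}
    (hp : p.Injective) (hq : q.Injective) {S : Set (κ → α)} (hS : MeasurableSet S) :
    μ ((fun ω k => Z (p k) ω) ⁻¹' S) = μ ((fun ω k => Z (q k) ω) ⁻¹' S) := by
  rw [← Measure.map_apply (measurable_pi_lambda _ fun k => hZ (p k)) hS,
    ← Measure.map_apply (measurable_pi_lambda _ fun k => hZ (q k)) hS,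
    (hind.precomp hp).map_fun_eq_infinitePi_map (fun k => hZ (p k)),
    (hind.precomp hq).map_fun_eq_infinitePi_map (fun k => hZ (q k))]
  simp only [hν]

theorem mul_le_of_cast_le_div {c x n : ℕ} {M : ℝ} (hc : 0 < c) (hM : (c : ℝ) ≤ M)
    (hx : (x : ℝ) ≤ n / M) : c * x ≤ n := by
  have hM₀ : 0 < M := lt_of_lt_of_le (by exact_mod_cast hc) hM
  rw [le_div_iff₀ hM₀] at hx
  have : (c : ℝ) * x ≤ n := by nlinarith [(Nat.cast_nonneg x : (0 : ℝ) ≤ x)]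
  exact_mod_cast this

/-- Corollary 2.3 of the paper: there is an `M₀ > 0` such that for all `M ≥ M₀`,
any i.i.d. positive integer gap sequence `X` (weights `W`) with an independent
copy `Y` (partial sums `U`), any `n ≥ 1` and any nonnegative integer `b ≤ n/M`,
`P({W i}_{1≤i≤T_{n-b}} ∩ {b + W'_{b,i}}_{1≤i≤T_{n-b}} ∩ [1, n/3] = ∅, Lₙ)
  ≤ P({W i} ∩ {b + U i} ∩ [1, n/3] = ∅)`. -/
theorem stmt9 :
    ∃ M₀ : ℝ, 0 < M₀ ∧ ∀ M : ℝ, M₀ ≤ M →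
    ∀ (Ω : Type) [MeasurableSpace Ω] (μ : Measure Ω), IsProbabilityMeasure μ →
    ∀ (X Y : ℕ → Ω → ℕ),
      (∀ i, Measurable (X i)) → (∀ i, Measurable (Y i)) →
      (∀ i ω, 0 < X i ω) → (∀ i ω, 0 < Y i ω) →
      iIndepFun (Sum.elim X Y) μ →
      (∀ s : ℕ ⊕ ℕ, IdentDistrib (Sum.elim X Y s) (X 1) μ μ) →
    ∀ (W U : ℕ → Ω → ℕ),
      (∀ m ω, W m ω = ∑ i ∈ Finset.Icc 1 m, X i ω) →
      (∀ m ω, U m ω = ∑ i ∈ Finset.Icc 1 m, Y i ω) →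
    ∀ n : ℕ, 1 ≤ n →
    ∀ b : ℕ, (b : ℝ) ≤ (n : ℝ) / M →
    ∀ (T : Ω → ℕ),
      (∀ ω, W (T ω) ω ≤ n - b ∧ ∀ i, W i ω ≤ n - b → i ≤ T ω) →
    ∀ (W' : ℕ → Ω → ℕ),
      (∀ i ω, W' i ω = W (T ω) ω - W (T ω - i) ω) →
    μ ({ω | ∀ i ∈ Finset.Icc 1 (T ω), ∀ i' ∈ Finset.Icc 1 (T ω),
          ¬ (W i ω = b + W' i' ω ∧ 1 ≤ W i ω ∧ 3 * W i ω ≤ n)}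
        ∩ {ω | ∀ i ∈ Finset.Icc 1 n, (X i ω : ℝ) ≤ (n : ℝ) / M})
      ≤ μ {ω | ∀ i : ℕ, 1 ≤ i → ∀ j : ℕ, 1 ≤ j →
          ¬ (W i ω = b + U j ω ∧ 1 ≤ W i ω ∧ 3 * W i ω ≤ n)} := by
  refine ⟨7, by norm_num, fun M hM Ω _ μ _ X Y hXm hYm hXpos _ hind hident W U hW hU n hn b hb
    T hT W' hW' => ?_⟩
  obtain rfl : W = fun m ω => partialSum (X · ω) m := funext₂ hW
  obtain rfl : U = fun m ω => partialSum (Y · ω) m := funext₂ hU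
  obtain rfl : W' = fun i ω => partialSum (X · ω) (T ω) - partialSum (X · ω) (T ω - i) :=
    funext₂ hW'
  have h7 : ∀ x : ℕ, (x : ℝ) ≤ n / M → 7 * x ≤ n := fun x =>
    mul_le_of_cast_le_div (by norm_num) (by exact_mod_cast hM)
  have hZ : ∀ s, Measurable (Sum.elim X Y s) := by rintro (i | i); exacts [hXm i, hYm i]
  let J : ℕ × ℕ → Set Ω := fun p => {ω | IsCut n b p.1 p.2 (X · ω)}
  let J' : ℕ × ℕ → Set Ω :=
    fun p => {ω | IsCut n b p.1 p.2 fun k => Sum.elim X Y (spliceIndex p.1 p.2 k) ω}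
  have hb₇ := h7 b hb
  have hexchange : ∀ p, μ (J p) = μ (J' p) := fun p =>
    measure_preimage_comp_eq_of_injective (Z := Sum.elim X Y) (p := Sum.inl) hZ hind
      (fun s => (hident s).map_eq) Sum.inl_injective (spliceIndex_injective p.1 p.2)
      (measurableSet_isCut n b p.1 p.2)
  have hJ'meas : ∀ p, MeasurableSet (J' p) := fun p =>
    measurableSet_isCut n b p.1 p.2 |>.preimage <| measurable_pi_lambda _ fun k => hZ _
  have hJ'cut : ∀ p, ∀ ω ∈ J' p, IsTwoSidedCut n b p.1 p.2 (X · ω) (Y · ω) := fun _ ω h =>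
    IsCut.isTwoSidedCut_splice (z := fun s => Sum.elim X Y s ω) hb₇ h
  have hJ'disj : Pairwise (Function.onFun Disjoint J') := fun p q hpq =>
    Set.disjoint_left.2 fun ω hp hq =>
      hpq <| Prod.ext_iff.2 <| (hJ'cut p ω hp).eq (hJ'cut q ω hq)
  calc _ ≤ μ (⋃ p, J p) := by
          refine measure_mono fun ω ⟨havoid, hgap⟩ => ?_
          obtain ⟨a, ha⟩ := exists_isCut hn hb₇ (hXpos · ω) (fun i hi => h7 _ (hgap i hi))
            (hT ω).1 (not_le.1 fun h => (hT ω).2 _ h |>.not_gt (Nat.lt_succ_self _)) havoid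
          exact Set.mem_iUnion.2 ⟨(a, T ω), ha⟩
    _ ≤ ∑' p, μ (J p) := measure_iUnion_le J
    _ = ∑' p, μ (J' p) := tsum_congr hexchange
    _ = μ (⋃ p, J' p) := (measure_iUnion hJ'disj hJ'meas).symm
    _ ≤ _ := by
          refine measure_mono <| Set.iUnion_subset fun p ω hω i hi j hj ⟨heq, _, hin⟩ => ?_
          exact (hJ'cut p ω hω).ne hi hj hin heq
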